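/- arXiv:2601.07775 — 5 statements merged into one kernel-verified Lean document; each statement's English description precedes it below -/
import Mathlib

section
/- In a toss-as-you-go game (reachability, parity, or energy objective) on a graph with n nodes, if both players play the optimal memoryless strategies constructed inductively over the number of unassigned nodes, then the first cycle closed in the play occurs within at most (n+1)(n+2)/2 steps; more precisely, if m nodes are unassigned at the start, a cycle is closed within Σ_{i=0}^{m} (n − i + 1) steps. -/
open scoped Classical

/-- A state of the explicit game of a toss-as-you-go game: a partial ownership function
(`some true` = Max, `some false` = Min, `none` = unassigned) together with the current node. -/
abbrev TAYGState (V : Type) := (V → Option Bool) × V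

/-- `TAYGPlay E σ τ p` : the sequence `p` is a play of the explicit game of the
toss-as-you-go game on graph `E`, consistent with the memoryless strategies `σ` (for Max)
and `τ` (for Min): at a state whose current node is unassigned, a coin toss assigns it
(either outcome may occur); at a Max-owned (resp. Min-owned) node, the next node is chosen
by `σ` (resp. `τ`). -/
def TAYGPlay {V : Type} [DecidableEq V] (E : V → V → Prop)
    (σ τ : TAYGState V → V) (p : ℕ → TAYGState V) : Prop :=
  ∀ k,
    ((p k).1 (p k).2 = none ∧
      ∃ b : Bool, p (k + 1) = (Function.update (p k).1 (p k).2 (some b), (p k).2)) ∨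
    ((p k).1 (p k).2 = some true ∧ p (k + 1) = ((p k).1, σ (p k))) ∨
    ((p k).1 (p k).2 = some false ∧ p (k + 1) = ((p k).1, τ (p k)))

/-! Between two coin tosses the ownership is fixed, so the play can visit each assigned node at
most once before a state repeats; while `j` nodes are unassigned, a phase therefore lasts at most
`n - j + 1` steps, the last of which is a toss. Inducting on the number `m` of unassigned nodes,
the phases add up to `Σ_{i ≤ m} (n - i + 1) ≤ Σ_{i ≤ n} (i + 1) = (n + 1)(n + 2) / 2`. -/

open Finset

def unassignedNodes {V : Type} [Fintype V] (own : V → Option Bool) : Finset V :=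
  univ.filter fun v => own v = none

lemma card_unassignedNodes_update_some {V : Type} [Fintype V] [DecidableEq V]
    {own : V → Option Bool} {v : V} (hv : own v = none) (b : Bool) :
    #(unassignedNodes (Function.update own v (some b))) + 1 = #(unassignedNodes own) := by
  have herase :
      unassignedNodes (Function.update own v (some b)) = (unassignedNodes own).erase v := by
    ext w
    by_cases hw : w = v
    · subst hw; simp [unassignedNodes]
    · simp [unassignedNodes, hw]
  rw [herase]
  exact card_erase_add_one (by simpa [unassignedNodes] using hv)

lemma card_unassignedNodes_compl {V : Type} [Fintype V] (own : V → Option Bool) :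
    #(univ.filter fun v => own v ≠ none) = Fintype.card V - #(unassignedNodes own) := by
  have := card_filter_add_card_filter_not (s := univ) fun v => own v = none
  simp only [unassignedNodes, ne_eq, card_univ] at this ⊢
  omega

lemma sum_range_sub_add_one_le {m n : ℕ} (hmn : m ≤ n) :
    ∑ i ∈ range (m + 1), (n - i + 1) ≤ (n + 1) * (n + 2) / 2 :=
  calc ∑ i ∈ range (m + 1), (n - i + 1)
      ≤ ∑ i ∈ range (n + 1), (n - i + 1) :=
        sum_le_sum_of_subset (range_subset_range.2 (by omega))
    _ = ∑ i ∈ range (n + 1), (i + 1) := sum_range_reflect (· + 1) (n + 1)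
    _ = ∑ i ∈ range (n + 2), i := (sum_range_succ' id (n + 1)).symm
    _ = (n + 1) * (n + 2) / 2 := by rw [sum_range_id, mul_comm]; rfl

namespace TAYGPlay

variable {V : Type} [DecidableEq V] {E : V → V → Prop} {σ τ : TAYGState V → V}
  {p : ℕ → TAYGState V}

lemma shift (hp : TAYGPlay E σ τ p) (t : ℕ) : TAYGPlay E σ τ (fun k => p (t + k)) :=
  fun k => hp (t + k)

lemma fst_succ_of_ne_none (hp : TAYGPlay E σ τ p) {k : ℕ} (hk : (p k).1 (p k).2 ≠ none) :
    (p (k + 1)).1 = (p k).1 := by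
  rcases hp k with ⟨hnone, -⟩ | ⟨-, hstep⟩ | ⟨-, hstep⟩
  · exact absurd hnone hk
  all_goals rw [hstep]

lemma fst_eq_of_forall_lt_ne_none (hp : TAYGPlay E σ τ p) {t : ℕ}
    (ht : ∀ k < t, (p k).1 (p k).2 ≠ none) : (p t).1 = (p 0).1 := by
  induction t with
  | zero => rfl
  | succ t ih =>
    rw [hp.fst_succ_of_ne_none (ht t t.lt_succ_self), ih fun k hk => ht k (by omega)]

lemma card_unassignedNodes_succ [Fintype V] (hp : TAYGPlay E σ τ p) {k : ℕ}
    (hk : (p k).1 (p k).2 = none) :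
    #(unassignedNodes (p (k + 1)).1) + 1 = #(unassignedNodes (p k).1) := by
  rcases hp k with ⟨-, b, hstep⟩ | ⟨hsome, -⟩ | ⟨hsome, -⟩
  · rw [hstep]
    exact card_unassignedNodes_update_some hk b
  all_goals simp [hk] at hsome

lemma exists_repeat_or_toss [Fintype V] (hp : TAYGPlay E σ τ p) :
    (∃ i j, i < j ∧ j ≤ Fintype.card V - #(unassignedNodes (p 0).1) ∧ p i = p j) ∨
      ∃ t ≤ Fintype.card V - #(unassignedNodes (p 0).1),
        (p t).1 = (p 0).1 ∧ (p t).1 (p t).2 = none := by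
  set d := Fintype.card V - #(unassignedNodes (p 0).1)
  by_cases htoss : ∃ t, t ≤ d ∧ (p t).1 (p t).2 = none
  · right
    refine ⟨Nat.find htoss, (Nat.find_spec htoss).1, ?_, (Nat.find_spec htoss).2⟩
    exact hp.fst_eq_of_forall_lt_ne_none fun k hk hnone =>
      Nat.find_min htoss hk ⟨(hk.trans_le (Nat.find_spec htoss).1).le, hnone⟩
  · left
    push Not at htoss
    have hown : ∀ k ≤ d, (p k).1 = (p 0).1 := fun k hk =>
      hp.fst_eq_of_forall_lt_ne_none fun i hi => htoss i (by omega)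
    have hmaps : ∀ k ∈ range (d + 1), (p k).2 ∈ univ.filter fun v => (p 0).1 v ≠ none := by
      intro k hk
      have hkd : k ≤ d := mem_range_succ_iff.1 hk
      simpa [← hown k hkd] using htoss k hkd
    obtain ⟨i, hi, j, hj, hij, hnode⟩ := exists_ne_map_eq_of_card_lt_of_maps_to
      (by rw [card_unassignedNodes_compl, card_range]; omega) hmaps
    have hi : i ≤ d := mem_range_succ_iff.1 hi
    have hj : j ≤ d := mem_range_succ_iff.1 hj
    have hstate : p i = p j := Prod.ext (by rw [hown i hi, hown j hj]) hnode
    rcases hij.lt_or_gt with hlt | hlt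
    · exact ⟨i, j, hlt, hj, hstate⟩
    · exact ⟨j, i, hlt, hi, hstate.symm⟩

theorem exists_repeat_le_sum [Fintype V] (hp : TAYGPlay E σ τ p) :
    ∃ i j, i < j ∧
      j ≤ ∑ i ∈ range (#(unassignedNodes (p 0).1) + 1), (Fintype.card V - i + 1) ∧
        p i = p j := by
  generalize hm : #(unassignedNodes (p 0).1) = m
  induction m generalizing p with
  | zero =>
    rcases hp.exists_repeat_or_toss with ⟨i, j, hij, hj, hrep⟩ | ⟨t, -, hown, htoss⟩
    · exact ⟨i, j, hij, by rw [zero_add, sum_range_one]; omega, hrep⟩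
    · have hcard := hp.card_unassignedNodes_succ htoss
      rw [hown, hm] at hcard
      omega
  | succ m ih =>
    rw [sum_range_succ]
    rcases hp.exists_repeat_or_toss with ⟨i, j, hij, hj, hrep⟩ | ⟨t, ht, hown, htoss⟩
    · exact ⟨i, j, hij, by omega, hrep⟩
    · have hcard := hp.card_unassignedNodes_succ htoss
      rw [hown] at hcard
      obtain ⟨i, j, hij, hj, hrep⟩ := ih (hp.shift (t + 1)) (by simp only [add_zero]; omega)
      exact ⟨t + 1 + i, t + 1 + j, by omega, by omega, hrep⟩

end TAYGPlay

theorem toss_as_you_go_cycle_bound_general {V : Type} [Fintype V] [DecidableEq V]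
    (E : V → V → Prop)
    (σ τ : TAYGState V → V)
    (own₀ : V → Option Bool) (v₀ : V)
    (p : ℕ → TAYGState V) (h0 : p 0 = (own₀, v₀)) (hplay : TAYGPlay E σ τ p) :
    (∃ i j, i < j ∧
        j ≤ ∑ i ∈ Finset.range ((Finset.univ.filter fun v => own₀ v = none).card + 1),
              (Fintype.card V - i + 1) ∧
        p i = p j) ∧
      ∑ i ∈ Finset.range ((Finset.univ.filter fun v => own₀ v = none).card + 1),
          (Fintype.card V - i + 1)
        ≤ (Fintype.card V + 1) * (Fintype.card V + 2) / 2 := by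
  have hunassigned : unassignedNodes (p 0).1 = univ.filter fun v => own₀ v = none := by
    rw [h0, unassignedNodes]
  exact ⟨hunassigned ▸ hplay.exists_repeat_le_sum,
    sum_range_sub_add_one_le ((card_filter_le _ _).trans_eq card_univ)⟩

/-- Path-length bound for toss-as-you-go games (items (e),(f) of the paper's lemma): if both
players play memoryless strategies (in particular, the optimal memoryless strategies) on a
graph with `n` nodes and `m` nodes are unassigned at the start, then the first cycle is closed
— i.e. an explicit-game state repeats — within `Σ_{i=0}^{m} (n − i + 1)` steps, and since
`m ≤ n` this bound is at most `(n+1)(n+2)/2`. -/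
theorem toss_as_you_go_cycle_bound {V : Type} [Fintype V] [DecidableEq V]
    (E : V → V → Prop) (hE : ∀ v, ∃ w, E v w)
    (σ τ : TAYGState V → V) (hσ : ∀ s, E s.2 (σ s)) (hτ : ∀ s, E s.2 (τ s))
    (own₀ : V → Option Bool) (v₀ : V)
    (p : ℕ → TAYGState V) (h0 : p 0 = (own₀, v₀)) (hplay : TAYGPlay E σ τ p) :
    (∃ i j, i < j ∧
        j ≤ ∑ i ∈ Finset.range ((Finset.univ.filter fun v => own₀ v = none).card + 1),
              (Fintype.card V - i + 1) ∧
        p i = p j) ∧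
      ∑ i ∈ Finset.range ((Finset.univ.filter fun v => own₀ v = none).card + 1),
          (Fintype.card V - i + 1)
        ≤ (Fintype.card V + 1) * (Fintype.card V + 2) / 2 :=
  toss_as_you_go_cycle_bound_general E σ τ own₀ v₀ p h0 hplay
end

section
/- Let G = (V, E) be a finite directed graph with terminals s, t, and suppose each edge e ∈ E is independently present with probability p. Let G' be the game graph with node set {e_uv : (u,v) ∈ E} ∪ {init, ⊤, ⊥} and edges as in the reliability reduction, with each non-sink node independently assigned to Max with probability p. Then the probability that Max wins the induced toss-at-start reachability game on G' (target ⊤) equals p times the probability that t is reachable from s in the random subgraph of G. -/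
open scoped Classical

/-- Max has a strategy to reach `target` regardless of Min's play in the two-player
reachability game with ownership `own` (`true` = Max). -/
inductive MaxWin {V : Type} (E : V → V → Prop) (own : V → Bool) (target : V) : V → Prop where
  | base : MaxWin E own target target
  | maxStep (v w : V) : own v = true → E v w → MaxWin E own target w → MaxWin E own target v
  | minStep (v : V) : own v = false → (∃ w, E v w) →
      (∀ w, E v w → MaxWin E own target w) → MaxWin E own target v

/-- The game graph `G'` of the reliability reduction.  Nodes: `Sum.inl (Sum.inl e)` is the
edge-node `e_uv` for the edge `e` of `G` (with endpoints `src e`, `tgt e`),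
`Sum.inl (Sum.inr ())` is `init`, `Sum.inr true` is `⊤` and `Sum.inr false` is `⊥`.
Edges: `init → e_sv` for edges out of `s`; `e_uv → e_vw` for composable pairs; `e_ut → ⊤`
for edges into `t`; every node other than `⊤` has an edge to `⊥`; self-loops on `⊤`, `⊥`. -/
def relE {ε V : Type} (src tgt : ε → V) (s t : V) :
    (ε ⊕ Unit) ⊕ Bool → (ε ⊕ Unit) ⊕ Bool → Prop
  | Sum.inl (Sum.inr _), Sum.inl (Sum.inl e) => src e = s
  | Sum.inl (Sum.inl e), Sum.inl (Sum.inl e') => tgt e = src e'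
  | Sum.inl (Sum.inl e), Sum.inr b => (b = true ∧ tgt e = t) ∨ b = false
  | Sum.inl (Sum.inr _), Sum.inr b => b = false
  | Sum.inr b, Sum.inr b' => b = b'
  | _, _ => False

/-- `t` is reachable from `s` in the random subgraph of `G` given by the present edges `χ`. -/
def ReachVia {ε V : Type} (src tgt : ε → V) (s t : V) (χ : ε → Bool) : Prop :=
  Relation.ReflTransGen (fun u v => ∃ e, χ e = true ∧ src e = u ∧ tgt e = v) s t

/-! Max wins the toss-at-start game from `init` exactly when the auxiliary edge into `s` is
present and Max owns a path `init, e_{s v₁}, …, e_{v_{k-1} t}, ⊤`: Min can always escape to the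
losing sink `⊥`, so the winning region is the set of nodes joined to `⊤` by Max-owned moves. Such
a path is an `s`–`t` path of present edges, and conversely, as an `s`–`t` path with `s ≠ t` is
nonempty. Splitting an assignment of `G'` into the edges of `G` and the bit of `init` turns the
probability of the first event into `p` times that of the second. -/

open Relation

def MaxMove {V : Type} (E : V → V → Prop) (own : V → Bool) (x y : V) : Prop :=
  own x = true ∧ E x y

theorem not_reflTransGen_maxMove_of_own_eq_false {V : Type} {E : V → V → Prop} {own : V → Bool}
    {target bot : V} (hbot : bot ≠ target) (hown : own bot = false) :
    ¬ ReflTransGen (MaxMove E own) bot target := by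
  rw [reflTransGen_iff_eq fun w hw => by simp [MaxMove, hown] at hw]
  exact hbot.symm

theorem maxWin_iff_reflTransGen_maxMove {V : Type} {E : V → V → Prop} {own : V → Bool}
    {target bot : V} (hbot : bot ≠ target) (hown : own bot = false)
    (hE : ∀ v, v ≠ target → E v bot) {v : V} :
    MaxWin E own target v ↔ ReflTransGen (MaxMove E own) v target := by
  constructor
  · intro hv
    induction hv with
    | base => exact .refl
    | maxStep v w hv hvw _ ih => exact .head ⟨hv, hvw⟩ ih
    | minStep v _ _ _ ih =>
      by_contra hne
      exact not_reflTransGen_maxMove_of_own_eq_false hbot hown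
        (ih bot (hE v fun h => hne (h ▸ .refl)))
  · intro hv
    induction hv using ReflTransGen.head_induction_on with
    | refl => exact .base
    | head hmove _ ih => exact .maxStep _ _ hmove.1 hmove.2 ih

section ReliabilityGame

variable {ε V : Type} (src tgt : ε → V) (s t : V) (χ : ε → Bool) (b : Bool)

local notation "owner" => Sum.elim (Sum.elim χ fun _ => b) fun _ => false

local notation "edgeNode" e => (Sum.inl (Sum.inl e) : (ε ⊕ Unit) ⊕ Bool)

theorem maxWin_relE_iff_reflTransGen {v : (ε ⊕ Unit) ⊕ Bool} :
    MaxWin (relE src tgt s t) owner (Sum.inr true) v ↔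
      ReflTransGen (MaxMove (relE src tgt s t) owner) v (Sum.inr true) :=
  maxWin_iff_reflTransGen_maxMove (bot := Sum.inr false) (by simp) rfl <| by
    rintro ((e | _) | _ | _) h
    exacts [Or.inr rfl, rfl, rfl, absurd rfl h]

theorem reflTransGen_maxMove_edgeNode_iff (e : ε) :
    ReflTransGen (MaxMove (relE src tgt s t) owner) (edgeNode e) (Sum.inr true) ↔
      χ e = true ∧ ReachVia src tgt (tgt e) t χ := by
  constructor
  · intro h
    generalize hx : (edgeNode e) = x at h
    induction h using ReflTransGen.head_induction_on generalizing e with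
    | refl => simp at hx
    | @head x y hxy hy ih =>
      subst hx
      obtain ⟨hχ, hE⟩ := hxy
      refine ⟨hχ, ?_⟩
      rcases y with (e' | _) | _ | _
      · obtain ⟨hχ', hreach⟩ := ih e' rfl
        exact ReflTransGen.head ⟨e', hχ', hE.symm, rfl⟩ hreach
      · exact hE.elim
      · exact absurd hy (not_reflTransGen_maxMove_of_own_eq_false (by simp) rfl)
      · obtain ⟨-, rfl⟩ | h := hE
        exacts [ReflTransGen.refl, absurd h (by simp)]
  · rintro ⟨hχ, hreach⟩
    unfold ReachVia at hreach
    generalize htgt : tgt e = u at hreach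
    induction hreach using ReflTransGen.head_induction_on generalizing e with
    | refl => exact .single ⟨hχ, Or.inl ⟨rfl, htgt⟩⟩
    | head hstep _ ih =>
      obtain ⟨e', hχ', rfl, rfl⟩ := hstep
      exact .head (b := edgeNode e') ⟨hχ, htgt⟩ (ih e' hχ' rfl)

theorem maxWin_relE_init_iff (hst : s ≠ t) :
    MaxWin (relE src tgt s t) owner (Sum.inr true) (Sum.inl (Sum.inr ())) ↔
      b = true ∧ ReachVia src tgt s t χ := by
  rw [maxWin_relE_iff_reflTransGen, ReflTransGen.cases_head_iff]
  constructor
  · rintro (h | ⟨y, ⟨hb, hE⟩, hy⟩)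
    · exact absurd h (by simp)
    refine ⟨hb, ?_⟩
    rcases y with (e | _) | _ | _
    · obtain ⟨hχ, hreach⟩ := (reflTransGen_maxMove_edgeNode_iff src tgt s t χ b e).1 hy
      exact ReflTransGen.head ⟨e, hχ, hE, rfl⟩ hreach
    · exact hE.elim
    · exact absurd hy (not_reflTransGen_maxMove_of_own_eq_false (by simp) rfl)
    · exact absurd hE (by simp [relE])
  · rintro ⟨hb, hreach⟩
    obtain h | ⟨u, ⟨e, hχ, hsrc, rfl⟩, hreach⟩ := ReflTransGen.cases_head hreach
    · exact absurd h hst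
    exact .inr ⟨edgeNode e, ⟨hb, hsrc⟩,
      (reflTransGen_maxMove_edgeNode_iff src tgt s t χ b e).2 ⟨hχ, hreach⟩⟩

end ReliabilityGame

theorem Fintype.sum_sumElim_unit {α γ M : Type} [Fintype α] [DecidableEq α] [Fintype γ]
    [AddCommMonoid M] (F : (α ⊕ Unit → γ) → M) :
    ∑ A : α ⊕ Unit → γ, F A = ∑ f : α → γ, ∑ c : γ, F (Sum.elim f fun _ => c) := by
  rw [← Fintype.sum_equiv (Equiv.sumArrowEquivProdArrow α Unit γ).symm _ F (fun _ => rfl),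
    Fintype.sum_prod_type]
  exact Fintype.sum_congr _ _ fun f =>
    Fintype.sum_equiv (Equiv.funUnique Unit γ) _ _ fun _ => by
      simp [Equiv.sumArrowEquivProdArrow]

theorem reliability_reduction_probability_general {ε V : Type} [Fintype ε] [DecidableEq ε]
    (src tgt : ε → V) (s t : V) (hst : s ≠ t) (p : ℝ) :
    ∑ A : ε ⊕ Unit → Bool,
        (∏ x : ε ⊕ Unit, if A x then p else 1 - p) *
          (if MaxWin (relE src tgt s t) (Sum.elim A fun _ => false) (Sum.inr true)
              (Sum.inl (Sum.inr ())) then 1 else 0)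
      = p * ∑ χ : ε → Bool,
          (∏ e : ε, if χ e then p else 1 - p) *
            (if ReachVia src tgt s t χ then 1 else 0) := by
  rw [Fintype.sum_sumElim_unit, Finset.mul_sum]
  refine Fintype.sum_congr _ _ fun χ => ?_
  simp [maxWin_relE_init_iff src tgt s t χ _ hst, Fintype.prod_sum_type, mul_comm]
  rfl

/-- Reliability reduction, probabilistic form: with every non-sink node of `G'` independently
assigned to Max with probability `p`, the probability that Max wins the induced toss-at-start
reachability game on `G'` (target `⊤`) equals `p` times the probability that `t` is reachable
from `s` in the random subgraph of `G` (each edge present independently with probability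
`p`). -/
theorem reliability_reduction_probability {ε V : Type} [Fintype ε] [DecidableEq ε]
    (src tgt : ε → V) (s t : V) (hst : s ≠ t) (p : ℝ) (hp : 0 < p) (hp1 : p < 1) :
    ∑ A : ε ⊕ Unit → Bool,
        (∏ x : ε ⊕ Unit, if A x then p else 1 - p) *
          (if MaxWin (relE src tgt s t) (Sum.elim A fun _ => false) (Sum.inr true)
              (Sum.inl (Sum.inr ())) then 1 else 0)
      = p * ∑ χ : ε → Bool,
          (∏ e : ε, if χ e then p else 1 - p) *
            (if ReachVia src tgt s t χ then 1 else 0) :=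
  reliability_reduction_probability_general src tgt s t hst p
end

section
/- Under a fixed ownership assignment of the nodes of a game graph G', namely the assignment own_χ induced by an edge-subset χ of G in the reliability reduction, Max has a winning strategy in the two-player reachability game on G' if and only if s can reach t in the subgraph G(χ) of present edges (and the auxiliary init edge is present). -/
/-! Max wins from an edge node `e` iff `e` is present and `t` is reachable from its head in
`G(χ)`, and from `init` iff the init-edge is present and `t` is reachable from `s` along at
least one edge. Every node other than `⊤` has a move to the losing sink `⊥`, so Max wins only
at nodes he owns, i.e. at present edges, and must keep following present edges until the
head of the current edge is `t`. -/

open Relation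

section ReliabilityGame

variable {ε V : Type} (src tgt : ε → V) (s t : V) (χ : ε ⊕ Unit → Bool)

def PresentAdj (u v : V) : Prop :=
  ∃ e, χ (Sum.inl e) = true ∧ src e = u ∧ tgt e = v

def RelWinning : (ε ⊕ Unit) ⊕ Bool → Prop
  | Sum.inl (Sum.inl e) => χ (Sum.inl e) = true ∧ ReflTransGen (PresentAdj src tgt χ) (tgt e) t
  | Sum.inl (Sum.inr ()) => χ (Sum.inr ()) = true ∧ TransGen (PresentAdj src tgt χ) s t
  | Sum.inr b => b = true

local notation "Win" => MaxWin (relE src tgt s t) (Sum.elim χ fun _ => false) (Sum.inr true)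

theorem relWinning_of_maxWin {n : (ε ⊕ Unit) ⊕ Bool} (h : Win n) :
    RelWinning src tgt s t χ n := by
  induction h with
  | base => rfl
  | maxStep v w hv hE _ ih =>
    rcases v with (e | ⟨⟩) | b <;> rcases w with (e' | ⟨⟩) | b' <;>
      simp only [relE, RelWinning, Sum.elim_inl, Sum.elim_inr] at hv hE ih ⊢
    · exact ⟨hv, .head ⟨e', ih.1, hE.symm, rfl⟩ ih.2⟩
    · rcases hE with ⟨-, rfl⟩ | rfl
      · exact ⟨hv, .refl⟩
      · exact absurd ih Bool.false_ne_true
    · exact ⟨hv, .head' ⟨e', ih.1, hE, rfl⟩ ih.2⟩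
    · exact absurd (hE ▸ ih) Bool.false_ne_true
    -- the remaining moves leave `⊤` or `⊥`, which Min owns
    all_goals exact absurd hv Bool.false_ne_true
  | minStep v _ hex _ ih =>
    rcases v with (e | ⟨⟩) | b
    · exact absurd (ih (Sum.inr false) (Or.inr rfl)) Bool.false_ne_true
    · exact absurd (ih (Sum.inr false) rfl) Bool.false_ne_true
    · obtain ⟨(_ | _) | b', hw⟩ := hex
      · exact hw.elim
      · exact hw.elim
      · exact (hw : b = b') ▸ ih _ hw

theorem maxWin_edge_of_reflTransGen {u : V} (hu : ReflTransGen (PresentAdj src tgt χ) u t) :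
    ∀ e, χ (Sum.inl e) = true → tgt e = u → Win (Sum.inl (Sum.inl e)) := by
  induction hu using ReflTransGen.head_induction_on with
  | refl =>
    intro e he ht
    exact .maxStep _ (Sum.inr true) he (Or.inl ⟨rfl, ht⟩) .base
  | head hadj _ ih =>
    obtain ⟨e', he', hsrc, htgt⟩ := hadj
    intro e he ht
    exact .maxStep _ (Sum.inl (Sum.inl e')) he (show tgt e = src e' by rw [ht, hsrc])
      (ih e' he' htgt)

theorem maxWin_of_relWinning {n : (ε ⊕ Unit) ⊕ Bool} (h : RelWinning src tgt s t χ n) :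
    Win n := by
  rcases n with (e | ⟨⟩) | b
  · exact maxWin_edge_of_reflTransGen src tgt s t χ h.2 e h.1 rfl
  · obtain ⟨hinit, hreach⟩ := h
    obtain ⟨u, ⟨e, he, hsrc, htgt⟩, hu⟩ := TransGen.head'_iff.mp hreach
    exact .maxStep _ (Sum.inl (Sum.inl e)) hinit hsrc
      (maxWin_edge_of_reflTransGen src tgt s t χ hu e he htgt)
  · cases (h : b = true)
    exact .base

theorem maxWin_relE_iff (n : (ε ⊕ Unit) ⊕ Bool) : Win n ↔ RelWinning src tgt s t χ n :=
  ⟨relWinning_of_maxWin src tgt s t χ, maxWin_of_relWinning src tgt s t χ⟩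

end ReliabilityGame

/-- Reliability reduction, deterministic form: under the fixed ownership assignment `own_χ`
induced by an edge-subset `χ` (node `e_uv` is Max-owned iff the edge `(u,v)` is present, and
`init` is Max-owned iff the auxiliary init-edge is present), Max has a winning strategy in the
two-player reachability game on `G'` iff the auxiliary init-edge is present and `s` can reach
`t` in the subgraph `G(χ)` of present edges. -/
theorem reliability_reduction_deterministic {ε V : Type} (src tgt : ε → V) (s t : V)
    (hst : s ≠ t) (χ : ε ⊕ Unit → Bool) :
    MaxWin (relE src tgt s t) (Sum.elim χ fun _ => false) (Sum.inr true)
        (Sum.inl (Sum.inr ())) ↔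
      χ (Sum.inr ()) = true ∧ ReachVia src tgt s t (fun e => χ (Sum.inl e)) := by
  rw [maxWin_relE_iff, RelWinning, ReachVia, reflTransGen_iff_eq_or_transGen,
    or_iff_right hst.symm]
  rfl
end

section
/- A reachability game can be encoded as an energy game preserving the winner: given a two-player game graph with n nodes and absorbing target set T, assign weight +1 to nodes in T and weight −1 to all other nodes, and set initial credit c = (n+1)(n+2)/2. Then Max wins the reachability objective from v iff Max wins the energy objective (all partial sums c + Σ_{i≤j} w(vᵢ) ≥ 0) from v, provided that when Max can win the reachability game, Max can reach T within (n+1)(n+2)/2 steps, and once in T the energy never decreases. -/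
open scoped Classical

/-- A play `π` is consistent with Max's strategy `σ`: whenever the current node is Max's,
the next node is the one prescribed by `σ` applied to the play history. -/
def Consistent {V : Type} (V₀ : Set V) (σ : List V → V) (π : ℕ → V) : Prop :=
  ∀ k, π k ∈ V₀ → π (k + 1) = σ (List.ofFn fun i : Fin (k + 1) => π i)

/-- Max can win objective `Obj` from `v`. -/
def WinsWith {V : Type} (E : V → V → Prop) (V₀ : Set V) (v : V)
    (Obj : (ℕ → V) → Prop) : Prop :=
  ∃ σ : List V → V, (∀ (l : List V) (x : V), E x (σ (l ++ [x]))) ∧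
    ∀ π : ℕ → V, π 0 = v → (∀ k, E (π k) (π (k + 1))) → Consistent V₀ σ π → Obj π

/-- Reachability objective: the play visits the target set `T`. -/
def ReachObj {V : Type} (T : Set V) (π : ℕ → V) : Prop := ∃ k, π k ∈ T

/-- Energy objective with weights `w` and initial credit `c`: all partial sums
`c + Σ_{i ≤ j} w (π i)` are nonnegative. -/
def EnergyObj {V : Type} (w : V → ℤ) (c : ℕ) (π : ℕ → V) : Prop :=
  ∀ j, 0 ≤ (c : ℤ) + ∑ i ∈ Finset.range (j + 1), w (π i)

open Finset

/-! With weight `-1` off `T` and `+1` on the absorbing set `T`, a play that enters `T` by step `k`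
loses at most `k` units of energy, so the credit `(n+1)(n+2)/2` covers any play reaching `T` within
that many steps. A play that never visits `T` loses one unit per step and exhausts every finite
credit. Both directions therefore keep the same strategy for Max. -/

theorem WinsWith.mono {V : Type} {E : V → V → Prop} {V₀ : Set V} {v : V}
    {Obj Obj' : (ℕ → V) → Prop} (h : WinsWith E V₀ v Obj)
    (hObj : ∀ π : ℕ → V, (∀ k, E (π k) (π (k + 1))) → Obj π → Obj' π) :
    WinsWith E V₀ v Obj' := by
  obtain ⟨σ, hσE, hσ⟩ := h
  exact ⟨σ, hσE, fun π h0 hE hcons => hObj π hE (hσ π h0 hE hcons)⟩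

theorem mem_of_absorbing {V : Type} {E : V → V → Prop} {T : Set V}
    (habs : ∀ u ∈ T, ∀ w, E u w → w ∈ T) {π : ℕ → V} (hE : ∀ k, E (π k) (π (k + 1)))
    {k i : ℕ} (hk : π k ∈ T) (hki : k ≤ i) : π i ∈ T := by
  induction i, hki using Nat.le_induction with
  | base => exact hk
  | succ i _ ih => exact habs _ ih _ (hE i)

theorem neg_le_sum_range_of_nonneg_from {f : ℕ → ℤ} {k : ℕ} (hf : ∀ i, -1 ≤ f i)
    (hk : ∀ i, k ≤ i → 0 ≤ f i) (m : ℕ) : -(k : ℤ) ≤ ∑ i ∈ range m, f i := by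
  calc -(k : ℤ) ≤ ∑ _i ∈ range (min m k), (-1 : ℤ) := by simp
    _ ≤ ∑ i ∈ range (min m k), f i := sum_le_sum fun i _ => hf i
    _ ≤ ∑ i ∈ range (min m k), f i + ∑ i ∈ Ico (min m k) m, f i :=
        le_add_of_nonneg_right <| sum_nonneg fun i hi => hk i <| by
          rw [mem_Ico] at hi; omega
    _ = ∑ i ∈ range m, f i := sum_range_add_sum_Ico f (min_le_left m k)

theorem sum_range_le_neg_of_le_neg_one {f : ℕ → ℤ} (hf : ∀ i, f i ≤ -1) (m : ℕ) :
    ∑ i ∈ range m, f i ≤ -(m : ℤ) := by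
  simpa using sum_le_sum fun i (_ : i ∈ range m) => hf i

section Energy

variable {V : Type} {w : V → ℤ} {c : ℕ} {π : ℕ → V}

theorem energyObj_of_nonneg_from {k : ℕ} (hw : ∀ u, -1 ≤ w u) (hkc : k ≤ c)
    (hπ : ∀ i, k ≤ i → 0 ≤ w (π i)) : EnergyObj w c π := fun j => by
  have := neg_le_sum_range_of_nonneg_from (fun i => hw (π i)) hπ (j + 1)
  have : (k : ℤ) ≤ c := by exact_mod_cast hkc
  omega

theorem not_energyObj_of_le_neg_one (hπ : ∀ i, w (π i) ≤ -1) : ¬ EnergyObj w c π := fun h => by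
  have := sum_range_le_neg_of_le_neg_one hπ (c + 1)
  have := h c
  omega

end Energy

/-- Encoding reachability as an energy game: with `n = |V|` nodes, absorbing target set `T`,
weight `+1` on `T` and `−1` elsewhere, and initial credit `c = (n+1)(n+2)/2`, Max wins the
reachability objective from `v` iff Max wins the energy objective from `v` — provided that
whenever Max can win the reachability game, Max can reach `T` within `(n+1)(n+2)/2` steps. -/
theorem reachability_as_energy {V : Type} [Fintype V] (E : V → V → Prop)
    (V₀ : Set V) (T : Set V) (habs : ∀ u ∈ T, ∀ w, E u w → w ∈ T) (v : V)
    (hfast : WinsWith E V₀ v (ReachObj T) →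
      WinsWith E V₀ v (fun π =>
        ∃ k ≤ (Fintype.card V + 1) * (Fintype.card V + 2) / 2, π k ∈ T)) :
    WinsWith E V₀ v (ReachObj T) ↔
      WinsWith E V₀ v (EnergyObj (fun u => if u ∈ T then (1 : ℤ) else -1)
        ((Fintype.card V + 1) * (Fintype.card V + 2) / 2)) := by
  constructor
  · refine fun hreach => (hfast hreach).mono fun π hE ⟨k, hkc, hk⟩ => ?_
    refine energyObj_of_nonneg_from (fun u => by split_ifs <;> norm_num) hkc fun i hki => ?_
    simp [mem_of_absorbing habs hE hk hki]
  · refine fun henergy => henergy.mono fun π _ hπ => ?_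
    by_contra hmiss
    refine not_energyObj_of_le_neg_one (fun i => ?_) hπ
    simp [show π i ∉ T from fun hi => hmiss ⟨i, hi⟩]
end

section
/- In the toss-as-you-go model, sure winning and almost-sure winning coincide: Max wins with probability 1 iff Max wins for every possible outcome of the coin tosses. Equivalently (contrapositively), if there exists a 'bad' lasso path in the game graph witnessing that Max does not win surely, then the event that every node on this lasso is assigned to Min has positive probability (namely ∏_v (1 − t(v)) over the distinct nodes v of the lasso, each t(v) ∈ (0,1)), and conditioned on this event Min wins, so Max's winning probability is strictly less than 1. -/
open scoped Classical

/-- Bellman-type solution of the explicit game of the toss-as-you-go reachability game on the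
finite directed graph `E` with coin-toss probabilities `t` and target node `target`. -/
def ExplicitSol {V : Type} [Fintype V] [DecidableEq V] (E : V → V → Prop) (t : V → ℝ)
    (target : V) (val : (V → Option Bool) → V → ℝ) : Prop :=
  (∀ own v, 0 ≤ val own v ∧ val own v ≤ 1) ∧
  (∀ own, val own target = 1) ∧
  (∀ own v, v ≠ target → own v = none →
    val own v = t v * val (Function.update own v (some true)) v
      + (1 - t v) * val (Function.update own v (some false)) v) ∧
  (∀ own v, v ≠ target → own v = some true →
    ∃ w, E v w ∧ val own v = val own w ∧ ∀ w', E v w' → val own w' ≤ val own v) ∧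
  (∀ own v, v ≠ target → own v = some false →
    ∃ w, E v w ∧ val own v = val own w ∧ ∀ w', E v w' → val own v ≤ val own w')

/-!
If no target-avoiding lasso starts at `v₀`, the target-avoiding successor relation is well founded
below `v₀`; well-founded induction then gives Max a win under every ownership assignment, and
forces the value `1` through the Bellman equations.

If a bad lasso starts at `v₀`, let `B` be the set of nodes from which one does. Min wins as soon as
she owns all of `B`, which happens with probability `∏ x ∈ B, (1 - t x) > 0`. The function
`1 - ∏ x ∈ B, P(x ends up Min's)` on `B`, and `1` elsewhere, solves the Bellman equations, so it
bounds the least solution from above.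
-/

open Relation

theorem acc_flip_of_forall_not_transGen {α : Type*} [Finite α] {r : α → α → Prop} {a : α}
    (h : ∀ b, ReflTransGen r a b → ¬ TransGen r b b) : Acc (flip r) a := by
  let S := {b // ReflTransGen r a b}
  -- on the nodes reachable from `a`, `TransGen r` is a strict order
  have hwf : WellFounded (fun b c : S => TransGen r c.1 b.1) :=
    @Finite.wellFounded_of_trans_of_irrefl S _ _ ⟨fun _ _ _ hbc hcd => hcd.trans hbc⟩
      ⟨fun b => h b.1 b.2⟩
  suffices ∀ b : S, Acc (flip r) b.1 from this ⟨a, .refl⟩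
  intro b
  induction b using hwf.induction with
  | _ b ih => exact ⟨_, fun c hbc => ih ⟨c, b.2.tail hbc⟩ (.single hbc)⟩

section Lasso

variable {V : Type} {E : V → V → Prop} {target : V}

def AvoidStep (E : V → V → Prop) (target : V) (a b : V) : Prop :=
  E a b ∧ b ≠ target

def HasBadLasso (E : V → V → Prop) (target : V) (v : V) : Prop :=
  v ≠ target ∧ ∃ u, ReflTransGen (AvoidStep E target) v u ∧ TransGen (AvoidStep E target) u u

theorem HasBadLasso.exists_succ {v : V} (h : HasBadLasso E target v) :
    ∃ w, E v w ∧ HasBadLasso E target w := by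
  obtain ⟨-, u, hvu, huu⟩ := h
  rcases hvu.cases_head with rfl | ⟨w, hvw, hwu⟩
  · obtain ⟨w, hvw, hwv⟩ := TransGen.head'_iff.1 huu
    exact ⟨w, hvw.1, hvw.2, v, hwv, huu⟩
  · exact ⟨w, hvw.1, hvw.2, u, hwu, huu⟩

theorem HasBadLasso.of_succ {v w : V} (hv : v ≠ target) (hvw : E v w)
    (hw : HasBadLasso E target w) : HasBadLasso E target v := by
  obtain ⟨hwt, u, hwu, huu⟩ := hw
  exact ⟨hv, u, .head ⟨hvw, hwt⟩ hwu, huu⟩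

theorem acc_of_not_hasBadLasso [Finite V] {v : V} (hv : v ≠ target)
    (h : ¬ HasBadLasso E target v) : Acc (flip (AvoidStep E target)) v :=
  acc_flip_of_forall_not_transGen fun u hvu huu => h ⟨hv, u, hvu, huu⟩

theorem maxWin_of_acc (hE : ∀ v, ∃ w, E v w) (A : V → Bool) {v : V}
    (hacc : Acc (flip (AvoidStep E target)) v) : MaxWin E A target v := by
  induction hacc with
  | intro v _ ih =>
    have hsucc : ∀ w, E v w → MaxWin E A target w := fun w hvw => by
      by_cases hwt : w = target
      · exact hwt ▸ .base
      · exact ih w ⟨hvw, hwt⟩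
    obtain ⟨w, hvw⟩ := hE v
    cases hA : A v
    · exact .minStep v hA ⟨w, hvw⟩ hsucc
    · exact .maxStep v w hA hvw (hsucc w hvw)

theorem not_maxWin_allMin_of_hasBadLasso {v : V} (h : HasBadLasso E target v) :
    ¬ MaxWin E (fun _ => false) target v := by
  intro hwin
  induction hwin with
  | base => exact h.1 rfl
  | maxStep _ _ hown => exact Bool.false_ne_true hown
  | minStep v _ _ _ ih =>
    obtain ⟨w, hvw, hw⟩ := h.exists_succ
    exact ih w hvw hw

theorem ExplicitSol.eq_one_of_acc [Fintype V] [DecidableEq V] {t : V → ℝ}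
    {val : (V → Option Bool) → V → ℝ} (hval : ExplicitSol E t target val) {v : V}
    (hacc : Acc (flip (AvoidStep E target)) v) (own : V → Option Bool) : val own v = 1 := by
  induction hacc generalizing own with
  | intro v _ ih =>
    by_cases hv : v = target
    · exact hv ▸ hval.2.1 own
    have hsucc : ∀ own' w, E v w → val own' w = 1 := fun own' w hvw => by
      by_cases hwt : w = target
      · exact hwt ▸ hval.2.1 own'
      · exact ih w ⟨hvw, hwt⟩ own'
    have howned : ∀ own' b, own' v = some b → val own' v = 1 := fun own' b hb => by
      obtain ⟨w, hvw, heq⟩ : ∃ w, E v w ∧ val own' v = val own' w := by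
        cases b
        · exact (hval.2.2.2.2 own' v hv hb).imp fun _ h => ⟨h.1, h.2.1⟩
        · exact (hval.2.2.2.1 own' v hv hb).imp fun _ h => ⟨h.1, h.2.1⟩
      rw [heq, hsucc own' w hvw]
    rcases ho : own v with _ | b
    · rw [hval.2.2.1 own v hv ho, howned _ true (by simp), howned _ false (by simp)]
      ring
    · exact howned own b ho

/-- Closure under non-target predecessors is what lets `trapVal` solve the Bellman equations
outside `B`. -/
structure IsMinTrap (E : V → V → Prop) (target : V) (B : Finset V) : Prop where
  target_notMem : target ∉ B
  exists_succ_mem : ∀ v ∈ B, ∃ w ∈ B, E v w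
  mem_of_succ_mem : ∀ v w, v ≠ target → E v w → w ∈ B → v ∈ B

theorem isMinTrap_hasBadLasso [Fintype V] :
    IsMinTrap E target (Finset.univ.filter (HasBadLasso E target)) where
  target_notMem := by simp [HasBadLasso]
  exists_succ_mem v hv := by
    obtain ⟨w, hvw, hw⟩ := (Finset.mem_filter.1 hv).2.exists_succ
    exact ⟨w, by simpa using hw, hvw⟩
  mem_of_succ_mem v w hv hvw hw := by
    simpa using HasBadLasso.of_succ hv hvw (by simpa using hw)

end Lasso

section Trap

variable {V : Type} [DecidableEq V] {E : V → V → Prop} {target : V}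

def minOwnedProb (p : ℝ) : Option Bool → ℝ
  | none => 1 - p
  | some true => 0
  | some false => 1

theorem minOwnedProb_nonneg {p : ℝ} (hp : p ≤ 1) (o : Option Bool) : 0 ≤ minOwnedProb p o := by
  rcases o with _ | _ | _ <;> simp [minOwnedProb, hp]

theorem minOwnedProb_le_one {p : ℝ} (hp : 0 ≤ p) (o : Option Bool) : minOwnedProb p o ≤ 1 := by
  rcases o with _ | _ | _ <;> simp [minOwnedProb, hp]

/-- A solution of the Bellman equations for a Min trap `B`, though not their least one. -/
noncomputable def trapVal (t : V → ℝ) (B : Finset V) (own : V → Option Bool) (v : V) : ℝ :=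
  if v ∈ B then 1 - ∏ x ∈ B, minOwnedProb (t x) (own x) else 1

variable {t : V → ℝ} {B : Finset V}

theorem prod_minOwnedProb_update {v : V} (hv : v ∈ B) (own : V → Option Bool) (o : Option Bool) :
    ∏ x ∈ B, minOwnedProb (t x) (Function.update own v o x)
      = minOwnedProb (t v) o * ∏ x ∈ B.erase v, minOwnedProb (t x) (own x) := by
  rw [← Finset.mul_prod_erase B _ hv, Function.update_self]
  congr 1
  exact Finset.prod_congr rfl fun x hx => by rw [Function.update_of_ne (Finset.ne_of_mem_erase hx)]

theorem trapVal_mem_Icc (ht : ∀ v, 0 ≤ t v ∧ t v ≤ 1) (own : V → Option Bool) (v : V) :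
    trapVal t B own v ∈ Set.Icc 0 1 := by
  have h0 := Finset.prod_nonneg fun x (_ : x ∈ B) => minOwnedProb_nonneg (ht x).2 (own x)
  have h1 := Finset.prod_le_one (fun x (_ : x ∈ B) => minOwnedProb_nonneg (ht x).2 (own x))
    fun x _ => minOwnedProb_le_one (ht x).1 (own x)
  unfold trapVal
  split_ifs <;> constructor <;> linarith

theorem trapVal_le_of_mem (ht : ∀ v, t v ≤ 1) (own : V → Option Bool) {v : V} (hv : v ∈ B)
    (w : V) : trapVal t B own v ≤ trapVal t B own w := by
  have h0 := Finset.prod_nonneg fun x (_ : x ∈ B) => minOwnedProb_nonneg (ht x) (own x)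
  unfold trapVal
  split_ifs <;> linarith

theorem trapVal_eq_one_of_maxOwned {own : V → Option Bool} {v : V} (hv : v ∈ B)
    (ho : own v = some true) (w : V) : trapVal t B own w = 1 := by
  have : ∏ x ∈ B, minOwnedProb (t x) (own x) = 0 :=
    Finset.prod_eq_zero hv (by rw [ho, minOwnedProb])
  simp [trapVal, this]

theorem IsMinTrap.trapVal_succ_eq (hB : IsMinTrap E target B) (own : V → Option Bool) {v w : V}
    (hv : v ∉ B) (hvt : v ≠ target) (hvw : E v w) : trapVal t B own w = trapVal t B own v := by
  have hw : w ∉ B := fun hw => hv (hB.mem_of_succ_mem v w hvt hvw hw)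
  simp [trapVal, hv, hw]

theorem trapVal_coin {own : V → Option Bool} {v : V} (ho : own v = none) :
    trapVal t B own v = t v * trapVal t B (Function.update own v (some true)) v
      + (1 - t v) * trapVal t B (Function.update own v (some false)) v := by
  by_cases hv : v ∈ B
  · simp only [trapVal, hv, if_true]
    rw [prod_minOwnedProb_update hv, prod_minOwnedProb_update hv,
      ← Finset.mul_prod_erase B (fun x => minOwnedProb (t x) (own x)) hv, ho]
    simp only [minOwnedProb]
    ring
  · simp only [trapVal, hv, if_false]
    ring

theorem IsMinTrap.explicitSol_trapVal [Fintype V] (hB : IsMinTrap E target B)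
    (hE : ∀ v, ∃ w, E v w) (ht : ∀ v, 0 ≤ t v ∧ t v ≤ 1) :
    ExplicitSol E t target (trapVal t B) := by
  have hsucc_of_const : ∀ own v, (∀ w, E v w → trapVal t B own w = trapVal t B own v) →
      ∃ w, E v w ∧ trapVal t B own v = trapVal t B own w := fun own v h => by
    obtain ⟨w, hvw⟩ := hE v
    exact ⟨w, hvw, (h w hvw).symm⟩
  refine ⟨fun own v => trapVal_mem_Icc ht own v, fun own => by simp [trapVal, hB.target_notMem],
    fun own v _ ho => trapVal_coin ho, fun own v hvt ho => ?_, fun own v hvt ho => ?_⟩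
  · have hsucc : ∀ w, E v w → trapVal t B own w = trapVal t B own v := by
      by_cases hv : v ∈ B
      · intro w _
        rw [trapVal_eq_one_of_maxOwned hv ho, trapVal_eq_one_of_maxOwned hv ho]
      · exact fun w => hB.trapVal_succ_eq own hv hvt
    obtain ⟨w, hvw, heq⟩ := hsucc_of_const own v hsucc
    exact ⟨w, hvw, heq, fun w' hvw' => (hsucc w' hvw').le⟩
  · by_cases hv : v ∈ B
    · obtain ⟨w, hw, hvw⟩ := hB.exists_succ_mem v hv
      refine ⟨w, hvw, ?_, fun w' _ => trapVal_le_of_mem (fun x => (ht x).2) own hv w'⟩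
      simp [trapVal, hv, hw]
    · have hsucc : ∀ w, E v w → trapVal t B own w = trapVal t B own v :=
        fun w => hB.trapVal_succ_eq own hv hvt
      obtain ⟨w, hvw, heq⟩ := hsucc_of_const own v hsucc
      exact ⟨w, hvw, heq, fun w' hvw' => (hsucc w' hvw').ge⟩

theorem trapVal_none_lt_one (ht : ∀ v, t v < 1) {v : V} (hv : v ∈ B) :
    trapVal t B (fun _ => none) v < 1 := by
  have : 0 < ∏ x ∈ B, minOwnedProb (t x) none :=
    Finset.prod_pos fun x _ => by simpa [minOwnedProb] using ht x
  simpa [trapVal, hv] using this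

end Trap

/-- In the toss-as-you-go model (reachability objective), sure winning and almost-sure winning
coincide: the value from the start node (with all nodes unassigned) equals 1 iff Max wins for
every possible outcome of the coin tosses, i.e. under every complete ownership assignment.
Moreover, if there is a "bad" lasso path — a path from the start node to a cycle, avoiding the
target — then Max's winning probability is strictly less than 1. -/
theorem toss_as_you_go_sure_iff_almost_sure {V : Type} [Fintype V] [DecidableEq V]
    (E : V → V → Prop) (hE : ∀ v, ∃ w, E v w)
    (t : V → ℝ) (ht : ∀ v, 0 < t v ∧ t v < 1) (target v₀ : V)
    (val : (V → Option Bool) → V → ℝ) (hval : ExplicitSol E t target val)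
    (hleast : ∀ u, ExplicitSol E t target u → ∀ own v, val own v ≤ u own v) :
    (val (fun _ => none) v₀ = 1 ↔ ∀ A : V → Bool, MaxWin E A target v₀) ∧
      ((v₀ ≠ target ∧ ∃ u, Relation.ReflTransGen (fun a b => E a b ∧ b ≠ target) v₀ u ∧
          Relation.TransGen (fun a b => E a b ∧ b ≠ target) u u) →
        val (fun _ => none) v₀ < 1) := by
  have hlasso : HasBadLasso E target v₀ → val (fun _ => none) v₀ < 1 := fun hbad =>
    calc val (fun _ => none) v₀
        ≤ trapVal t (Finset.univ.filter (HasBadLasso E target)) (fun _ => none) v₀ :=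
          hleast _ (isMinTrap_hasBadLasso.explicitSol_trapVal hE
            fun v => ⟨(ht v).1.le, (ht v).2.le⟩) _ _
      _ < 1 := trapVal_none_lt_one (fun v => (ht v).2) (by simpa using hbad)
  refine ⟨?_, hlasso⟩
  by_cases hvt : v₀ = target
  · subst hvt
    exact iff_of_true (hval.2.1 _) fun _ => .base
  by_cases hbad : HasBadLasso E target v₀
  · exact iff_of_false (hlasso hbad).ne fun hwin => not_maxWin_allMin_of_hasBadLasso hbad (hwin _)
  · have hacc := acc_of_not_hasBadLasso hvt hbad
    exact iff_of_true (hval.eq_one_of_acc hacc _) fun A => maxWin_of_acc hE A hacc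
end
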